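/- arXiv:1301.4657 — 3 statements merged into one kernel-verified Lean document; each statement's English description precedes it below -/
import Mathlib

section
/- For each integer n ≥ 2, let G be the graph obtained by taking 2n−2 disjoint copies of the complete graph K_{2n−1}, adding one new vertex v, and joining v to exactly two vertices in each copy. Then G is connected, has odd order (2n−2)(2n−1)+1, minimum degree 2n−2, satisfies o(G − S) ≤ 2n·|S| for every nonempty S ⊆ V(G), and G has no spanning subgraph F with d_F(u) ∈ {1,3,...,2n−1,2n} for all vertices u. -/
open SimpleGraph

/-- Number of odd-order components of `G - S`. -/
noncomputable def oddComp {V : Type*} [Fintype V] (G : SimpleGraph V) (S : Set V) : ℕ :=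
  Nat.card {c : (G.induce Sᶜ).ConnectedComponent // Odd (Nat.card c.supp)}

/-- Degree of `v` in `F` (no decidability assumptions). -/
noncomputable def ndeg {V : Type*} (F : SimpleGraph V) (v : V) : ℕ :=
  Nat.card (F.neighborSet v)

/-- The base relation for the sharpness example: `2n-2` copies of `K_{2n-1}` plus an
apex vertex joined to exactly the first two vertices of each copy. -/
def sharpRel (n : ℕ) :
    Option (Fin (2 * n - 2) × Fin (2 * n - 1)) →
      Option (Fin (2 * n - 2) × Fin (2 * n - 1)) → Prop
  | some p, some q => p.1 = q.1
  | none, some p => (p.2 : ℕ) < 2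
  | _, _ => False

/-!
A vertex of a copy of `K_{2n-1}` has degree at most `2n-1` in `G`, so in an `H_n`-factor `F` its
degree is odd. Each copy has odd order, hence by the handshake lemma it sends an odd number of
`F`-edges out of itself; they all go to the apex, and at most two of them exist, so exactly one
does. The apex then has `F`-degree `2n-2`, which is even and different from `2n`.
The odd-component bound is crude: `G - S` has at most one component per copy, plus the apex.
-/

open Finset

theorem ndeg_eq_degree {V : Type*} (G : SimpleGraph V) (v : V) [Fintype (G.neighborSet v)] :
    ndeg G v = G.degree v := by
  rw [ndeg, Nat.card_eq_fintype_card, card_neighborSet_eq_degree]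

namespace SimpleGraph

section Parity

variable {V : Type*} [Fintype V] [DecidableEq V] (G : SimpleGraph V) [DecidableRel G.Adj]

theorem even_sum_card_neighborFinset_inter (s : Finset V) :
    Even (∑ v ∈ s, #(G.neighborFinset v ∩ s)) := by
  have hdeg (v : (s : Set V)) : (G.induce s).degree v = #(G.neighborFinset v ∩ s) := by
    rw [← card_neighborFinset_eq_degree, ← card_map (.subtype _)]
    congr 1
    ext w
    simp [and_comm]
  rw [← sum_coe_sort s]
  simp_rw [← hdeg]
  exact (G.induce s).sum_degrees_eq_twice_card_edges ▸ even_two_mul _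

theorem odd_sum_card_neighborFinset_sdiff {s : Finset V} (hs : Odd #s)
    (hodd : ∀ v ∈ s, Odd (G.degree v)) : Odd (∑ v ∈ s, #(G.neighborFinset v \ s)) := by
  have hsum : Odd (∑ v ∈ s, G.degree v) := by
    rwa [odd_sum_iff_odd_card_odd, filter_true_of_mem hodd]
  simp only [← card_neighborFinset_eq_degree] at hsum
  rw [← sum_congr rfl fun v _ => card_inter_add_card_sdiff (G.neighborFinset v) s,
    sum_add_distrib] at hsum
  exact (Nat.odd_add'.mp hsum).mpr (even_sum_card_neighborFinset_inter G s)

end Parity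

theorem oddComp_le_card_connectedComponent {V : Type*} [Fintype V] (G : SimpleGraph V)
    (S : Set V) : oddComp G S ≤ Nat.card (G.induce Sᶜ).ConnectedComponent :=
  Nat.card_le_card_of_injective Subtype.val Subtype.val_injective

theorem card_connectedComponent_le_of_reachable {V β : Type*} [Finite β] {G : SimpleGraph V}
    (f : V → β) (hf : ∀ v w, f v = f w → G.Reachable v w) :
    Nat.card G.ConnectedComponent ≤ Nat.card β := by
  refine Nat.card_le_card_of_injective (fun c => f c.out) fun c d h => ?_
  rw [← c.out_eq, ← d.out_eq]
  exact ConnectedComponent.sound (hf _ _ h)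

theorem degree_eq_ite_adj_none_add {W : Type*} [Fintype W] (G : SimpleGraph (Option W))
    [DecidableRel G.Adj] (x : Option W) :
    G.degree x = (if G.Adj x none then 1 else 0) + #{q | G.Adj x (some q)} := by
  rw [← card_neighborFinset_eq_degree, neighborFinset_eq_filter, card_filter, Fintype.sum_option,
    card_filter]

end SimpleGraph

section SharpGraph

variable {n : ℕ}

def sharpGraph (n : ℕ) : SimpleGraph (Option (Fin (2 * n - 2) × Fin (2 * n - 1))) :=
  fromRel (sharpRel n)

noncomputable instance : DecidableRel (sharpGraph n).Adj := Classical.decRel _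

@[simp]
theorem sharpGraph_adj_some_some {p q : Fin (2 * n - 2) × Fin (2 * n - 1)} :
    (sharpGraph n).Adj (some p) (some q) ↔ p ≠ q ∧ p.1 = q.1 := by
  simp only [sharpGraph, fromRel_adj, sharpRel, eq_comm (a := q.1), or_self, ne_eq,
    Option.some.injEq]

@[simp]
theorem sharpGraph_adj_none_some {p : Fin (2 * n - 2) × Fin (2 * n - 1)} :
    (sharpGraph n).Adj none (some p) ↔ (p.2 : ℕ) < 2 := by
  simp [sharpGraph, sharpRel]

@[simp]
theorem sharpGraph_adj_some_none {p : Fin (2 * n - 2) × Fin (2 * n - 1)} :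
    (sharpGraph n).Adj (some p) none ↔ (p.2 : ℕ) < 2 := by
  rw [adj_comm, sharpGraph_adj_none_some]

theorem sharpGraph_degree_none (hn : 2 ≤ n) : (sharpGraph n).degree none = (2 * n - 2) * 2 := by
  have hcard : #{q : Fin (2 * n - 2) × Fin (2 * n - 1) | (q.2 : ℕ) < 2} = (2 * n - 2) * 2 := by
    rw [← univ_product_univ, filter_product_right fun b : Fin (2 * n - 1) => (b : ℕ) < 2,
      card_product, card_univ, Fintype.card_fin, Fin.card_filter_val_lt, min_eq_right (by omega)]
  rw [degree_eq_ite_adj_none_add, if_neg (sharpGraph n).irrefl, zero_add]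
  convert hcard using 3
  exact sharpGraph_adj_none_some

theorem sharpGraph_degree_some (p : Fin (2 * n - 2) × Fin (2 * n - 1)) :
    (sharpGraph n).degree (some p) = (if (p.2 : ℕ) < 2 then 1 else 0) + (2 * n - 2) := by
  rw [degree_eq_ite_adj_none_add]
  simp only [sharpGraph_adj_some_none, sharpGraph_adj_some_some]
  congr 1
  have : ({q | p ≠ q ∧ p.1 = q.1} : Finset _) = ({p.1} ×ˢ univ).erase p := by
    ext q; simp [Prod.ext_iff, eq_comm, and_comm]
  rw [this, card_erase_of_mem (by simp), card_product, card_singleton, card_univ,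
    Fintype.card_fin]
  omega

theorem sharpGraph_reachable_none (v : Option (Fin (2 * n - 2) × Fin (2 * n - 1))) :
    (sharpGraph n).Reachable none v := by
  rcases v with _ | ⟨i, a⟩
  · rfl
  by_cases ha : (a : ℕ) < 2
  · exact (sharpGraph_adj_none_some.mpr ha).reachable
  · let a₀ : Fin (2 * n - 1) := ⟨0, a.pos⟩
    have h₀ : (sharpGraph n).Adj none (some (i, a₀)) :=
      sharpGraph_adj_none_some.mpr (by simp [a₀])
    have h₁ : (sharpGraph n).Adj (some (i, a₀)) (some (i, a)) :=
      sharpGraph_adj_some_some.mpr ⟨fun h => ha ((Prod.mk.inj h).2 ▸ Nat.zero_lt_two), rfl⟩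
    exact h₀.reachable.trans h₁.reachable

theorem sharpGraph_connected : (sharpGraph n).Connected :=
  connected_iff_exists_forall_reachable _ |>.mpr ⟨none, sharpGraph_reachable_none⟩

theorem card_connectedComponent_induce_sharpGraph_le
    (S : Set (Option (Fin (2 * n - 2) × Fin (2 * n - 1)))) :
    Nat.card ((sharpGraph n).induce Sᶜ).ConnectedComponent ≤ 2 * n - 2 + 1 := by
  have hcard : Nat.card (Option (Fin (2 * n - 2))) = 2 * n - 2 + 1 := by simp
  refine hcard ▸ card_connectedComponent_le_of_reachable (fun v => v.1.map Prod.fst) ?_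
  rintro ⟨_ | p, _⟩ ⟨_ | q, _⟩ h <;> simp only [Option.map_none, Option.map_some,
    reduceCtorEq, Option.some.injEq] at h
  · rfl
  · by_cases hpq : p = q
    · subst hpq; rfl
    · exact Adj.reachable (induce_adj.mpr (sharpGraph_adj_some_some.mpr ⟨hpq, h⟩))

def sharpCopy (n : ℕ) (i : Fin (2 * n - 2)) :
    Finset (Option (Fin (2 * n - 2) × Fin (2 * n - 1))) :=
  univ.map ⟨fun b => some (i, b), fun b c h => by simpa using h⟩

theorem mem_sharpCopy {i : Fin (2 * n - 2)} {x : Option (Fin (2 * n - 2) × Fin (2 * n - 1))} :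
    x ∈ sharpCopy n i ↔ ∃ b, some (i, b) = x := by
  simp only [sharpCopy, mem_map, mem_univ, true_and]
  rfl

theorem sum_sharpCopy {M : Type*} [AddCommMonoid M] (i : Fin (2 * n - 2))
    (f : Option (Fin (2 * n - 2) × Fin (2 * n - 1)) → M) :
    ∑ x ∈ sharpCopy n i, f x = ∑ b, f (some (i, b)) :=
  sum_map _ _ _

section Factor

variable {F : SimpleGraph (Option (Fin (2 * n - 2) × Fin (2 * n - 1)))} [DecidableRel F.Adj]

theorem card_neighborFinset_sdiff_sharpCopy (hF : F ≤ sharpGraph n) (i : Fin (2 * n - 2))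
    (b : Fin (2 * n - 1)) :
    #(F.neighborFinset (some (i, b)) \ sharpCopy n i) =
      if F.Adj none (some (i, b)) then 1 else 0 := by
  have hcopy (j c) (h : F.Adj (some (i, b)) (some (j, c))) : i = j :=
    (sharpGraph_adj_some_some.mp (hF h)).2
  have : F.neighborFinset (some (i, b)) \ sharpCopy n i =
      if F.Adj none (some (i, b)) then {none} else ∅ := by
    ext x
    rcases x with _ | ⟨j, c⟩
    · split_ifs with h <;> simp [F.adj_comm, h, mem_sharpCopy]
    · split_ifs <;> simpa [mem_sharpCopy] using hcopy j c
  rw [this, apply_ite card, card_singleton, card_empty]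

theorem odd_card_adj_none_sharpCopy (hF : F ≤ sharpGraph n)
    (hodd : ∀ p, Odd (F.degree (some p))) (i : Fin (2 * n - 2)) :
    Odd #{b | F.Adj none (some (i, b))} := by
  have hcard : Odd #(sharpCopy n i) := by
    rw [sharpCopy, card_map, card_univ, Fintype.card_fin]
    exact ⟨n - 1, by have := i.pos; omega⟩
  have := F.odd_sum_card_neighborFinset_sdiff hcard fun v hv => by
    obtain ⟨b, rfl⟩ := mem_sharpCopy.mp hv
    exact hodd (i, b)
  rw [sum_sharpCopy] at this
  simp only [card_neighborFinset_sdiff_sharpCopy hF] at this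
  rwa [card_filter]

theorem card_adj_none_sharpCopy (hF : F ≤ sharpGraph n)
    (hodd : ∀ p, Odd (F.degree (some p))) (i : Fin (2 * n - 2)) :
    #{b | F.Adj none (some (i, b))} = 1 := by
  have hle : #{b | F.Adj none (some (i, b))} ≤ #{b : Fin (2 * n - 1) | (b : ℕ) < 2} :=
    card_le_card (monotone_filter_right _ fun b _ h => sharpGraph_adj_none_some.mp (hF h))
  rw [Fin.card_filter_val_lt] at hle
  obtain ⟨k, hk⟩ := odd_card_adj_none_sharpCopy hF hodd i
  omega

theorem degree_none_of_le_sharpGraph (hF : F ≤ sharpGraph n)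
    (hodd : ∀ p, Odd (F.degree (some p))) : F.degree none = 2 * n - 2 := by
  rw [degree_eq_ite_adj_none_add, if_neg F.irrefl, zero_add, card_filter, Fintype.sum_prod_type]
  simp_rw [← card_filter, card_adj_none_sharpCopy hF hodd]
  simp

end Factor

theorem sharpGraph_not_exists_factor (hn : 0 < n) :
    ¬ ∃ F : SimpleGraph (Option (Fin (2 * n - 2) × Fin (2 * n - 1))), F ≤ sharpGraph n ∧
      ∀ u, (Odd (ndeg F u) ∧ ndeg F u ≤ 2 * n - 1) ∨ ndeg F u = 2 * n := by
  classical
  rintro ⟨F, hF, hdeg⟩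
  simp only [ndeg_eq_degree] at hdeg
  have hodd (p) : Odd (F.degree (some p)) := by
    have : F.degree (some p) ≤ 2 * n - 1 := (degree_le_of_le hF).trans <| by
      rw [sharpGraph_degree_some]; split_ifs <;> omega
    rcases hdeg (some p) with h | h
    · exact h.1
    · omega
  rcases hdeg none with ⟨h, -⟩ | h <;> rw [degree_none_of_le_sharpGraph hF hodd] at h
  · exact Nat.not_odd_iff_even.mpr ⟨n - 1, by omega⟩ h
  · omega

end SharpGraph

/-- Sharpness of the minimum-degree bound `2n-1`. -/
theorem stmt_5 (n : ℕ) (hn : 2 ≤ n) :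
    let G := SimpleGraph.fromRel (sharpRel n)
    G.Connected ∧
    Fintype.card (Option (Fin (2 * n - 2) × Fin (2 * n - 1))) = (2 * n - 2) * (2 * n - 1) + 1 ∧
    Odd (Fintype.card (Option (Fin (2 * n - 2) × Fin (2 * n - 1)))) ∧
    (∀ v, 2 * n - 2 ≤ ndeg G v) ∧ (∃ v, ndeg G v = 2 * n - 2) ∧
    (∀ S : Finset (Option (Fin (2 * n - 2) × Fin (2 * n - 1))), S.Nonempty →
      oddComp G (↑S : Set (Option (Fin (2 * n - 2) × Fin (2 * n - 1)))) ≤ 2 * n * S.card) ∧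
    ¬ ∃ F : SimpleGraph (Option (Fin (2 * n - 2) × Fin (2 * n - 1))), F ≤ G ∧
        ∀ u, (Odd (ndeg F u) ∧ ndeg F u ≤ 2 * n - 1) ∨ ndeg F u = 2 * n := by
  intro G
  rw [show G = sharpGraph n from rfl]
  have hcard : Fintype.card (Option (Fin (2 * n - 2) × Fin (2 * n - 1))) =
      (2 * n - 2) * (2 * n - 1) + 1 := by
    simp
  refine ⟨sharpGraph_connected, hcard, ?_, fun v => ?_,
    ⟨some (⟨0, by omega⟩, ⟨2, by omega⟩), ?_⟩, fun S hS => ?_,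
    sharpGraph_not_exists_factor (by omega)⟩
  · exact hcard ▸ (Even.mul_right ⟨n - 1, by omega⟩ _).add_one
  · rcases v with _ | p <;>
      simp only [ndeg_eq_degree (sharpGraph n), sharpGraph_degree_none hn, sharpGraph_degree_some]
    all_goals omega
  · simp [ndeg_eq_degree (sharpGraph n), sharpGraph_degree_some]
  · have hcomp := card_connectedComponent_induce_sharpGraph_le (n := n) S
    have hodd := (sharpGraph n).oddComp_le_card_connectedComponent S
    have hS' : 2 * n ≤ 2 * n * #S := Nat.le_mul_of_pos_right _ hS.card_pos
    omega
end

section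
/- Let n be an odd positive integer and G a finite simple graph on an even number of vertices. If o(G − S) ≤ n·|S| for every S ⊆ V(G) (in particular G has no odd components, taking S = ∅), then G has a spanning subgraph in which every vertex has degree exactly 1, 3, ..., or n; in particular for n = 1 this recovers Tutte's 1-factor theorem: G has a perfect matching iff o(G − S) ≤ |S| for all S. -/
open SimpleGraph

/-!
Replace every vertex of `G` by a clique on `n` copies and join all copies of adjacent vertices.
If `U` is a set of copies and `S` the set of vertices all of whose copies lie in `U`, the
components of the blow-up minus `U` correspond bijectively to the components `D` of `G - S`,
the one over `D` having `n|D| - |U ∩ (D × n)|` vertices. An odd one therefore lies over an odd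
component of `G - S` or over one met by the projection of `U \ (S × n)`, so there are at most
`n|S| + |U \ (S × n)| = |U|` of them, and Tutte's theorem gives a perfect matching of the
blow-up. Contracting the cliques turns it into a multigraph in which every vertex has degree `n`;
keep the pairs of distinct vertices joined an odd number of times. The degree of `v` in the result
is at most `n`, and has the parity of `n` minus twice the number of matching edges inside the
clique of `v`.
-/

open Finset Function

lemma ndeg_eq_card_filter {V : Type*} [Fintype V] (F : SimpleGraph V) [DecidableRel F.Adj]
    (v : V) : ndeg F v = #{w | F.Adj v w} := by
  rw [ndeg, Nat.card_eq_card_toFinset]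
  congr 1
  ext w
  simp

section CrossCount

variable {α V : Type*} [Fintype α] [DecidableEq V] (f : α → V) {m : α → α}

def crossCount (m : α → α) (u v : V) : ℕ := #{a | f a = u ∧ f (m a) = v}

lemma crossCount_comm (hm : Involutive m) (u v : V) :
    crossCount f m u v = crossCount f m v u :=
  card_nbij' m m (fun a ha => by simp_all [hm a]) (fun a ha => by simp_all [hm a])
    (fun a _ => hm a) (fun a _ => hm a)

lemma even_crossCount_self (hm : Involutive m) (hfix : ∀ a, m a ≠ a) (v : V) :
    Even (crossCount f m v v) := by
  rw [crossCount, ← ZMod.natCast_eq_zero_iff_even, card_eq_sum_ones, Nat.cast_sum, Nat.cast_one]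
  exact sum_involution (fun a _ => m a) (fun _ _ => by decide) (fun a _ _ => hfix a)
    (by simp +contextual [hm _]) (fun a _ => hm a)

lemma sum_crossCount [Fintype V] (u : V) : ∑ v, crossCount f m u v = #{a | f a = u} := by
  rw [card_eq_sum_card_fiberwise (f := fun a => f (m a)) (t := univ) (by simp)]
  simp only [crossCount, filter_filter]

def oddCrossGraph (m : α → α) : SimpleGraph V := fromRel fun u v => Odd (crossCount f m u v)

lemma oddCrossGraph_adj (hm : Involutive m) {u v : V} :
    (oddCrossGraph f m).Adj u v ↔ u ≠ v ∧ Odd (crossCount f m u v) := by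
  rw [oddCrossGraph, fromRel_adj, crossCount_comm f hm v u, or_self]

lemma oddCrossGraph_le {G : SimpleGraph V} (hm : Involutive m)
    (hG : ∀ a, f a ≠ f (m a) → G.Adj (f a) (f (m a))) : oddCrossGraph f m ≤ G := by
  intro u v huv
  obtain ⟨hne, hodd⟩ := (oddCrossGraph_adj f hm).1 huv
  obtain ⟨a, ha⟩ := card_pos.1 hodd.pos
  simp only [mem_filter, mem_univ, true_and] at ha
  obtain ⟨rfl, rfl⟩ := ha
  exact hG a hne

variable [Fintype V]

lemma ndeg_oddCrossGraph (hm : Involutive m) (v : V) :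
    ndeg (oddCrossGraph f m) v = #{u ∈ univ.erase v | Odd (crossCount f m v u)} := by
  classical
  rw [ndeg_eq_card_filter]
  congr 1
  ext u
  simp [oddCrossGraph_adj f hm, ne_comm]

lemma odd_ndeg_oddCrossGraph (hm : Involutive m) (hfix : ∀ a, m a ≠ a) {v : V}
    (hv : Odd #{a | f a = v}) : Odd (ndeg (oddCrossGraph f m) v) := by
  rw [ndeg_oddCrossGraph f hm, ← odd_sum_iff_odd_card_odd]
  rw [← sum_crossCount f, ← add_sum_erase _ _ (mem_univ v)] at hv
  exact (Nat.odd_add'.1 hv).2 (even_crossCount_self f hm hfix v)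

lemma ndeg_oddCrossGraph_le (hm : Involutive m) (v : V) :
    ndeg (oddCrossGraph f m) v ≤ #{a | f a = v} := by
  rw [ndeg_oddCrossGraph f hm, ← sum_crossCount f, ← add_sum_erase _ _ (mem_univ v)]
  calc #{u ∈ univ.erase v | Odd (crossCount f m v u)}
      ≤ ∑ u ∈ univ.erase v with Odd (crossCount f m v u), crossCount f m v u :=
        (card_eq_sum_ones _).trans_le (sum_le_sum fun u hu => (mem_filter.1 hu).2.pos)
    _ ≤ ∑ u ∈ univ.erase v, crossCount f m v u := sum_le_sum_of_subset (filter_subset _ _)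
    _ ≤ _ := Nat.le_add_left _ _

end CrossCount

namespace SimpleGraph

lemma Subgraph.IsPerfectMatching.exists_involutive {W : Type*} {H : SimpleGraph W}
    {M : H.Subgraph} (hM : M.IsPerfectMatching) :
    ∃ m : W → W, Involutive m ∧ ∀ p, M.Adj p (m p) := by
  choose m hm using fun p => (Subgraph.isPerfectMatching_iff.1 hM p).exists
  exact ⟨m, fun p => (Subgraph.isPerfectMatching_iff.1 hM (m p)).unique (hm (m p)) (hm p).symm, hm⟩

variable {W X : Type*} {H : SimpleGraph W} {G : SimpleGraph X} {π : W → X}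

lemma reachable_iff_of_connected_fibers
    (hadj : ∀ p q, H.Adj p q → π p = π q ∨ G.Adj (π p) (π q))
    (hfiber : ∀ p q, π p = π q → H.Reachable p q)
    (hlift : ∀ p x, G.Adj (π p) x → ∃ q, π q = x ∧ H.Adj p q) (p q : W) :
    H.Reachable p q ↔ G.Reachable (π p) (π q) := by
  refine ⟨fun h => ?_, fun h => ?_⟩
  · rw [reachable_iff_reflTransGen] at h ⊢
    refine Relation.ReflTransGen.lift' π (fun a b hab => ?_) p q h
    rcases hadj a b hab with h | h
    · rw [Function.onFun, h]
    · exact .single h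
  · suffices ∀ x, Relation.ReflTransGen G.Adj x (π q) → ∀ p, π p = x → H.Reachable p q from
      this _ ((reachable_iff_reflTransGen _ _).1 h) p rfl
    intro x hx
    induction hx using Relation.ReflTransGen.head_induction_on with
    | refl => exact fun p hp => hfiber p q hp
    | head hxy _ ih =>
      rintro p rfl
      obtain ⟨r, rfl, hpr⟩ := hlift p _ hxy
      exact hpr.reachable.trans (ih r rfl)

namespace ConnectedComponent

def mapOfReachableIff (π : W → X) (hπ : ∀ p q, H.Reachable p q ↔ G.Reachable (π p) (π q)) :
    H.ConnectedComponent → G.ConnectedComponent :=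
  ConnectedComponent.lift (fun p => G.connectedComponentMk (π p))
    fun p q w _ => ConnectedComponent.sound ((hπ p q).1 w.reachable)

variable (hπ : ∀ p q, H.Reachable p q ↔ G.Reachable (π p) (π q))
include hπ

lemma mem_supp_mapOfReachableIff {C : H.ConnectedComponent} {p : W} :
    π p ∈ (mapOfReachableIff π hπ C).supp ↔ p ∈ C.supp := by
  induction C using ConnectedComponent.ind with
  | h q => simp [mapOfReachableIff, mem_supp_iff, ConnectedComponent.eq, hπ]

lemma mapOfReachableIff_injective : Injective (mapOfReachableIff π hπ) := by
  intro C C' h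
  obtain ⟨p, hp⟩ := C.nonempty_supp
  have hp' : p ∈ C'.supp := by
    rwa [← mem_supp_mapOfReachableIff hπ, ← h, mem_supp_mapOfReachableIff hπ]
  exact eq_of_common_vertex hp hp'

end ConnectedComponent

def blowup {V : Type*} (G : SimpleGraph V) (n : ℕ) : SimpleGraph (V × Fin n) where
  Adj p q := (p.1 = q.1 ∧ p.2 ≠ q.2) ∨ G.Adj p.1 q.1
  symm := ⟨by
    rintro p q (⟨h₁, h₂⟩ | h)
    exacts [.inl ⟨h₁.symm, h₂.symm⟩, .inr h.symm]⟩
  loopless := ⟨by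
    rintro p (⟨-, h⟩ | h)
    exacts [h rfl, G.loopless.irrefl _ h]⟩

section BlowupTutte

variable {V : Type*} {G : SimpleGraph V} {n : ℕ} (U : Set (V × Fin n))

def coveredVerts : Set V := {v | ∀ i, (v, i) ∈ U}

/-- `blowup G n - U`, in the form used by `IsTutteViolator`. -/
abbrev blowupDel (G : SimpleGraph V) (n : ℕ) (U : Set (V × Fin n)) :=
  ((⊤ : (blowup G n).Subgraph).deleteVerts U).coe

def blowupProj (p : ((⊤ : (blowup G n).Subgraph).deleteVerts U).verts) : ↥(coveredVerts U)ᶜ :=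
  ⟨p.1.1, fun h => p.2.2 (h p.1.2)⟩

lemma blowupDel_adj {p q} : (blowupDel G n U).Adj p q ↔ (blowup G n).Adj p q := by
  simp [p.2.2, q.2.2]

lemma reachable_blowupDel_iff (p q) : (blowupDel G n U).Reachable p q ↔
    (G.induce (coveredVerts U)ᶜ).Reachable (blowupProj U p) (blowupProj U q) := by
  refine reachable_iff_of_connected_fibers (fun p q h => ?_) (fun p q h => ?_)
    (fun p x h => ?_) p q
  · rcases (blowupDel_adj U).1 h with ⟨h, -⟩ | h
    exacts [.inl (Subtype.ext h), .inr h]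
  · rcases eq_or_ne p q with rfl | hpq
    · rfl
    refine ((blowupDel_adj U).2 (.inl ⟨congrArg Subtype.val h, fun hi => hpq ?_⟩)).reachable
    exact Subtype.ext (Prod.ext (congrArg Subtype.val h) hi)
  · obtain ⟨i, hi⟩ := not_forall.1 x.2
    exact ⟨⟨(x.1, i), trivial, hi⟩, rfl, (blowupDel_adj U).2 (.inr h)⟩

abbrev blowupComp :
    (blowupDel G n U).ConnectedComponent → (G.induce (coveredVerts U)ᶜ).ConnectedComponent :=
  ConnectedComponent.mapOfReachableIff (blowupProj U) (reachable_blowupDel_iff U)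

lemma card_supp_blowupDel {C : (blowupDel G n U).ConnectedComponent}
    (hC : ∀ x ∈ U, ∀ y ∈ (blowupComp U C).supp, x.1 ≠ y.1) :
    Nat.card C.supp = Nat.card (blowupComp U C).supp * n := by
  have hsupp : Subtype.val '' C.supp = (Subtype.val '' (blowupComp U C).supp) ×ˢ Set.univ := by
    ext x
    constructor
    · rintro ⟨p, hp, rfl⟩
      exact ⟨⟨blowupProj U p, (ConnectedComponent.mem_supp_mapOfReachableIff _).2 hp, rfl⟩,
        trivial⟩
    · obtain ⟨v, i⟩ := x
      rintro ⟨⟨y, hy, rfl⟩, -⟩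
      have hvi : (y.1, i) ∉ U := fun h => hC _ h y hy rfl
      exact ⟨⟨(y.1, i), trivial, hvi⟩, (ConnectedComponent.mem_supp_mapOfReachableIff _).1 hy, rfl⟩
  rw [Nat.card_coe_set_eq, Nat.card_coe_set_eq,
    ← Set.ncard_image_of_injective _ Subtype.val_injective, hsupp, Set.ncard_prod,
    Set.ncard_univ, Nat.card_fin, Set.ncard_image_of_injective _ Subtype.val_injective]

lemma oddComp_eq_ncard_oddComponents [Fintype V] (G : SimpleGraph V) (S : Set V) :
    oddComp G S = (G.induce Sᶜ).oddComponents.ncard := by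
  simp only [oddComp, Nat.card_coe_set_eq]
  rfl

lemma ncard_oddComponents_blowupDel_le [Fintype V]
    (hcond : ∀ S : Finset V, oddComp G ↑S ≤ n * S.card) :
    (blowupDel G n U).oddComponents.ncard ≤ U.ncard := by
  set S := coveredVerts U
  set φ := blowupComp U
  set B := {C | ∃ x ∈ U, ∃ y ∈ (φ C).supp, x.1 = y.1}
  have hcover : (blowupDel G n U).oddComponents ⊆ φ ⁻¹' (G.induce Sᶜ).oddComponents ∪ B := by
    intro C hC
    by_contra h
    simp only [Set.mem_union, Set.mem_preimage, Set.mem_ofPred_eq, not_or, not_exists,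
      not_and, B] at h
    change Odd C.supp.ncard at hC
    rw [← Nat.card_coe_set_eq, card_supp_blowupDel U h.2, Nat.card_coe_set_eq] at hC
    exact h.1 (Nat.odd_mul.1 hC).1
  have hA : (φ ⁻¹' (G.induce Sᶜ).oddComponents).ncard ≤ n * S.ncard := by
    calc _ ≤ (G.induce Sᶜ).oddComponents.ncard :=
          Set.ncard_le_ncard_of_injOn φ (fun _ h => h)
            (ConnectedComponent.mapOfReachableIff_injective _).injOn
      _ ≤ n * S.ncard := by
        have := hcond (Set.toFinite S).toFinset
        rwa [Set.Finite.coe_toFinset, ← Set.ncard_eq_toFinset_card,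
          oddComp_eq_ncard_oddComponents] at this
  have hB : B.ncard ≤ (U \ S ×ˢ Set.univ).ncard := by
    have hwit : ∀ C : B, ∃ x : ↥(U \ S ×ˢ Set.univ), ∃ y ∈ (φ C).supp, x.1.1 = y.1 := by
      rintro ⟨C, x, hx, y, hy, hxy⟩
      exact ⟨⟨x, hx, fun h => y.2 (hxy ▸ h.1)⟩, y, hy, hxy⟩
    choose w y hy hxy using hwit
    rw [← Nat.card_coe_set_eq, ← Nat.card_coe_set_eq]
    refine Nat.card_le_card_of_injective w fun C C' h => Subtype.ext ?_
    have hyy : y C = y C' := Subtype.ext ((hxy C).symm.trans (h ▸ hxy C'))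
    exact ConnectedComponent.mapOfReachableIff_injective _
      (ConnectedComponent.eq_of_common_vertex (hy C) (hyy ▸ hy C'))
  have hU : U.ncard = n * S.ncard + (U \ S ×ˢ Set.univ).ncard := by
    have hfull : U ∩ S ×ˢ Set.univ = S ×ˢ Set.univ :=
      Set.inter_eq_right.2 fun x hx => hx.1 x.2
    rw [← Set.ncard_inter_add_ncard_sdiff_eq_ncard U (S ×ˢ Set.univ), hfull, Set.ncard_prod,
      Set.ncard_univ, Nat.card_fin, mul_comm]
  calc _ ≤ (φ ⁻¹' (G.induce Sᶜ).oddComponents ∪ B).ncard := Set.ncard_le_ncard hcover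
    _ ≤ _ := Set.ncard_union_le _ _
    _ ≤ U.ncard := by omega

end BlowupTutte

end SimpleGraph

lemma card_filter_fst_eq {V : Type*} [Fintype V] [DecidableEq V] (n : ℕ) (v : V) :
    #{p : V × Fin n | p.1 = v} = n :=
  calc #{p : V × Fin n | p.1 = v} = #(({v} : Finset V) ×ˢ (univ : Finset (Fin n))) := by
        congr 1; ext ⟨w, i⟩; simp [eq_comm]
    _ = n := by simp

theorem stmt_13_general {V : Type*} [Fintype V] (G : SimpleGraph V) (n : ℕ) (hn : Odd n)
    (hcond : ∀ S : Finset V, oddComp G (↑S : Set V) ≤ n * S.card) :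
    ∃ F : SimpleGraph V, F ≤ G ∧ ∀ v : V, Odd (ndeg F v) ∧ ndeg F v ≤ n := by
  classical
  obtain ⟨M, hM⟩ := tutte.2 fun U hU => (ncard_oddComponents_blowupDel_le U hcond).not_gt hU
  obtain ⟨m, hm, hMm⟩ := hM.exists_involutive
  refine ⟨oddCrossGraph Prod.fst m, oddCrossGraph_le _ hm fun p hp => ?_, fun v => ⟨?_, ?_⟩⟩
  · exact (M.adj_sub (hMm p)).resolve_left fun h => hp h.1
  · exact odd_ndeg_oddCrossGraph _ hm (fun p => (hMm p).ne.symm)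
      ((card_filter_fst_eq n v).symm ▸ hn)
  · exact (ndeg_oddCrossGraph_le _ hm v).trans_eq (card_filter_fst_eq n v)

/-- Amahashi's theorem (sufficiency, even order): if `o(G-S) ≤ n|S|` for all `S`, then `G`
has a `(1,n)`-odd factor; for `n = 1` this is Tutte's perfect matching theorem. -/
theorem stmt_13 {V : Type*} [Fintype V] (G : SimpleGraph V) (n : ℕ) (hn : Odd n)
    (hpos : 0 < n) (heven : Even (Fintype.card V))
    (hcond : ∀ S : Finset V, oddComp G (↑S : Set V) ≤ n * S.card) :
    ∃ F : SimpleGraph V, F ≤ G ∧ ∀ v : V, Odd (ndeg F v) ∧ ndeg F v ≤ n :=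
  stmt_13_general G n hn hcond
end

section
/- Let G be a finite simple graph and let F be a spanning subgraph of G such that the edge set of F is maximal among spanning subgraphs minimizing the deviation ∇_H(F) = Σ_v min{|d_F(v) − h| : h ∈ H(v)}, where H(v) = {1,3,...,f(v)−1, f(v)} with f even-valued, f ≥ 4, and d_G(v) ≥ f(v) − 1 for all v. If d_F(v) ≤ f(v) for all v and F is not an H-factor, then there exists an edge e of G not in F such that F + e has the same deviation as F. -/
/-!
A vertex `v` with `d_F(v) ≤ f(v)` and `d_F(v) ∉ H(v)` has even degree `d ≤ f(v) - 2`, so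
`d < f(v) - 1 ≤ d_G(v)` and some edge `vw` of `G` is missing from `F`. Adding it makes `d_F(v)`
odd and at most `f(v) - 1`, so the deviation at `v` drops by at least one, while at `w` it
grows by at most one. Hence the deviation does not increase, and by minimality it is unchanged.
-/

open SimpleGraph

/-- Distance from `d` to the set `H_f = {1,3,…,f-1,f}` (`f` even). -/
noncomputable def devAt (f d : ℕ) : ℕ :=
  sInf {k : ℕ | ∃ h : ℕ, ((Odd h ∧ h ≤ f) ∨ h = f) ∧ k = ((d : ℤ) - (h : ℤ)).natAbs}

/-- Deviation `∇_{H_f}(F)` of a spanning subgraph `F`. -/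
noncomputable def dev {V : Type*} [Fintype V] (f : V → ℕ) (F : SimpleGraph V) : ℕ :=
  ∑ v : V, devAt (f v) (ndeg F v)

lemma devAt_le {f d h : ℕ} (hh : (Odd h ∧ h ≤ f) ∨ h = f) :
    devAt f d ≤ ((d : ℤ) - (h : ℤ)).natAbs :=
  Nat.sInf_le ⟨h, hh, rfl⟩

lemma exists_devAt_eq (f d : ℕ) :
    ∃ h : ℕ, ((Odd h ∧ h ≤ f) ∨ h = f) ∧ devAt f d = ((d : ℤ) - (h : ℤ)).natAbs :=
  Nat.sInf_mem (s := {k : ℕ | ∃ h : ℕ, ((Odd h ∧ h ≤ f) ∨ h = f) ∧ k = ((d : ℤ) - (h : ℤ)).natAbs})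
    ⟨_, f, Or.inr rfl, rfl⟩

lemma devAt_succ_le (f d : ℕ) : devAt f (d + 1) ≤ devAt f d + 1 := by
  obtain ⟨h, hh, he⟩ := exists_devAt_eq f d
  have := devAt_le (d := d + 1) hh
  omega

lemma devAt_eq_zero_of_odd {f d : ℕ} (hd : Odd d) (hdf : d ≤ f) : devAt f d = 0 := by
  simpa using devAt_le (f := f) (d := d) (Or.inl ⟨hd, hdf⟩)

lemma devAt_pos_of_even {f d : ℕ} (hd : Even d) (hdf : d ≠ f) : 0 < devAt f d := by
  obtain ⟨h, hh, he⟩ := exists_devAt_eq f d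
  rcases hh with ⟨hodd, -⟩ | rfl
  · have : d ≠ h := by rintro rfl; exact Nat.not_odd_iff_even.mpr hd hodd
    omega
  · omega

lemma devAt_succ_add_one_le {f d : ℕ} (hd : Even d) (hdf : d < f) :
    devAt f (d + 1) + 1 ≤ devAt f d := by
  rw [devAt_eq_zero_of_odd hd.add_one hdf]
  exact devAt_pos_of_even hd hdf.ne

theorem Finset.sum_le_sum_of_transfer {ι : Type*} [Fintype ι] [DecidableEq ι] {a b : ι → ℕ}
    {i j : ι} (hij : i ≠ j) (hi : a i + 1 ≤ b i) (hj : a j ≤ b j + 1)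
    (h : ∀ k, k ≠ i → k ≠ j → a k = b k) : ∑ k, a k ≤ ∑ k, b k := by
  have key : ∀ k, a k + (if k = i then 1 else 0) ≤ b k + (if k = j then 1 else 0) := by
    intro k
    by_cases hki : k = i
    · subst hki; simp [hij, hi]
    by_cases hkj : k = j
    · subst hkj; simp [hki, hj]
    simp [hki, hkj, h k hki hkj]
  have := Finset.sum_le_sum fun k (_ : k ∈ Finset.univ) => key k
  simp only [Finset.sum_add_distrib, Finset.sum_ite_eq', Finset.mem_univ, if_true] at this
  omega

namespace SimpleGraph

variable {V : Type*} {F G : SimpleGraph V} {u v w : V}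

lemma ndeg_eq_ncard (F : SimpleGraph V) (v : V) : ndeg F v = (F.neighborSet v).ncard :=
  Nat.card_coe_set_eq _

lemma neighborSet_sup_edge_left (hvw : v ≠ w) :
    (F ⊔ edge v w).neighborSet v = insert w (F.neighborSet v) := by
  ext x
  simp only [mem_neighborSet, sup_adj, edge_adj, Set.mem_insert_iff]
  grind

lemma neighborSet_sup_edge_of_ne (hv : u ≠ v) (hw : u ≠ w) :
    (F ⊔ edge v w).neighborSet u = F.neighborSet u := by
  ext x
  simp [edge_adj, hv, hw]

lemma ndeg_sup_edge_of_ne (hv : u ≠ v) (hw : u ≠ w) : ndeg (F ⊔ edge v w) u = ndeg F u := by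
  rw [ndeg_eq_ncard, ndeg_eq_ncard, neighborSet_sup_edge_of_ne hv hw]

variable [Finite V]

lemma ndeg_sup_edge_left (hvw : v ≠ w) (hF : ¬F.Adj v w) :
    ndeg (F ⊔ edge v w) v = ndeg F v + 1 := by
  rw [ndeg_eq_ncard, ndeg_eq_ncard, neighborSet_sup_edge_left hvw,
    Set.ncard_insert_of_notMem (s := F.neighborSet v) hF (Set.toFinite _)]

lemma ndeg_sup_edge_right (hvw : v ≠ w) (hF : ¬F.Adj v w) :
    ndeg (F ⊔ edge v w) w = ndeg F w + 1 := by
  rw [edge_comm]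
  exact ndeg_sup_edge_left hvw.symm (fun h => hF h.symm)

lemma exists_adj_not_adj_of_ndeg_lt (h : ndeg F v < ndeg G v) : ∃ w, G.Adj v w ∧ ¬F.Adj v w := by
  by_contra! hGF
  have : G.neighborSet v ⊆ F.neighborSet v := hGF
  have := Set.ncard_le_ncard this (Set.toFinite _)
  rw [← ndeg_eq_ncard, ← ndeg_eq_ncard] at this
  omega

end SimpleGraph

open SimpleGraph in
lemma dev_sup_edge_le {V : Type*} [Fintype V] (f : V → ℕ) {F : SimpleGraph V} {v w : V}
    (hvw : v ≠ w) (hF : ¬F.Adj v w) (hev : Even (ndeg F v)) (hlt : ndeg F v < f v) :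
    dev f (F ⊔ edge v w) ≤ dev f F := by
  classical
  refine Finset.sum_le_sum_of_transfer hvw ?_ ?_ fun u hv hw => ?_
  · rw [ndeg_sup_edge_left hvw hF]
    exact devAt_succ_add_one_le hev hlt
  · rw [ndeg_sup_edge_right hvw hF]
    exact devAt_succ_le _ _
  · rw [ndeg_sup_edge_of_ne hv hw]

lemma even_and_add_two_le_of_not_mem {f d : ℕ} (hf : Even f) (hdf : d ≤ f)
    (hd : ¬((Odd d ∧ d ≤ f - 1) ∨ d = f)) : Even d ∧ d + 2 ≤ f := by
  rw [← Nat.not_odd_iff_even] at hf ⊢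
  rw [Nat.odd_iff] at hf hd ⊢
  omega

theorem stmt_14_general {V : Type*} [Fintype V] (G : SimpleGraph V)
    (f : V → ℕ) (hfe : ∀ v, Even (f v))
    (hdeg : ∀ v, f v - 1 ≤ ndeg G v)
    (F : SimpleGraph V) (hF : F ≤ G)
    (hmin : ∀ F' : SimpleGraph V, F' ≤ G → dev f F ≤ dev f F')
    (hle : ∀ v, ndeg F v ≤ f v)
    (hnotfac : ¬ ∀ v : V, (Odd (ndeg F v) ∧ ndeg F v ≤ f v - 1) ∨ ndeg F v = f v) :
    ∃ e ∈ G.edgeSet, e ∉ F.edgeSet ∧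
      dev f (F ⊔ SimpleGraph.fromEdgeSet {e}) = dev f F := by
  obtain ⟨v, hv⟩ := not_forall.mp hnotfac
  obtain ⟨hev, hlt⟩ := even_and_add_two_le_of_not_mem (hfe v) (hle v) hv
  have hGv : ndeg F v < ndeg G v := by have := hdeg v; omega
  obtain ⟨w, hG, hFvw⟩ := exists_adj_not_adj_of_ndeg_lt hGv
  have hvw : v ≠ w := G.ne_of_adj hG
  refine ⟨s(v, w), hG, hFvw, le_antisymm (dev_sup_edge_le f hvw hFvw hev (by omega)) (hmin _ ?_)⟩
  exact sup_le hF ((edge_le_iff (G := G)).mpr (Or.inr hG))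

/-- If `F` is an edge-maximal deviation minimizer with `d_F ≤ f` everywhere and `F` is
not an `H_f`-factor, then some edge of `G` outside `F` can be added without changing the
deviation. -/
theorem stmt_14 {V : Type*} [Fintype V] (G : SimpleGraph V)
    (f : V → ℕ) (hfe : ∀ v, Even (f v)) (hf4 : ∀ v, 4 ≤ f v)
    (hdeg : ∀ v, f v - 1 ≤ ndeg G v)
    (F : SimpleGraph V) (hF : F ≤ G)
    (hmin : ∀ F' : SimpleGraph V, F' ≤ G → dev f F ≤ dev f F')
    (hmax : ∀ F' : SimpleGraph V, F' ≤ G → dev f F' = dev f F → F ≤ F' → F' = F)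
    (hle : ∀ v, ndeg F v ≤ f v)
    (hnotfac : ¬ ∀ v : V, (Odd (ndeg F v) ∧ ndeg F v ≤ f v - 1) ∨ ndeg F v = f v) :
    ∃ e ∈ G.edgeSet, e ∉ F.edgeSet ∧
      dev f (F ⊔ SimpleGraph.fromEdgeSet {e}) = dev f F :=
  stmt_14_general G f hfe hdeg F hF hmin hle hnotfac
end
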